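/- arXiv:2301.13785 — 4 statements merged into one kernel-verified Lean document; each statement's English description precedes it below -/
import Mathlib

section
/- In the front-running game, if q·P_B(s) > f and (1-q)·P_A(s) < c, then in the backward-induction equilibrium player A sends no message and consequently B sends no message either; hence the threat of front-running destroys the exchange whenever P_A(s) > c but (1-q)·P_A(s) < c. -/
/-- In the front-running game, B attacks iff his expected gain from the fast
message exceeds its cost: `q * P_B(s) > f`. -/
def Battacks (q PB f : ℝ) : Prop := q * PB > f

/-- A sends her message iff her expected payoff exceeds the message cost,
correctly anticipating B's attack decision (backward induction). -/
def Asends (q c f PA PB : ℝ) : Prop :=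
  (Battacks q PB f ∧ (1 - q) * PA > c) ∨ (¬ Battacks q PB f ∧ PA > c)

/-- B sends a (fast) message iff he wants to attack and A actually sent a message. -/
def Bsends (q c f PA PB : ℝ) : Prop :=
  Battacks q PB f ∧ Asends q c f PA PB

theorem not_asends_of_battacks {q c f PA PB : ℝ} (hB : Battacks q PB f)
    (hA : (1 - q) * PA ≤ c) : ¬ Asends q c f PA PB := by
  rintro (⟨-, hsend⟩ | ⟨hpeaceful, -⟩)
  · exact hA.not_gt hsend
  · exact hpeaceful hB

theorem threat_destroys_exchange_general (q c f PA PB : ℝ)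
    (hB : q * PB > f) (hA : (1 - q) * PA < c) :
    ¬ Asends q c f PA PB ∧ ¬ Bsends q c f PA PB := by
  have hA_silent : ¬ Asends q c f PA PB := not_asends_of_battacks hB hA.le
  exact ⟨hA_silent, fun hB_sends => hA_silent hB_sends.2⟩

/-- If `q·P_B(s) > f` and `(1-q)·P_A(s) < c`, then in equilibrium A sends no
message and consequently B sends no message either: even when `P_A(s) > c`,
the threat of front-running destroys the exchange. -/
theorem threat_destroys_exchange (q c f PA PB : ℝ)
    (hq0 : 0 < q) (hq1 : q < 1) (hc : 0 < c) (hf : c < f)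
    (hB : q * PB > f) (hA : (1 - q) * PA < c) :
    ¬ Asends q c f PA PB ∧ ¬ Bsends q c f PA PB :=
  threat_destroys_exchange_general q c f PA PB hB hA
end

section
/- In the two-attacker contest without the commit-reveal protocol, if f̲₁ ≥ f̄₂ then there is a pure-strategy equilibrium in which attacker 1 spends f̲₁ and attacker 2 spends 0, where f̲₁ = argmax_f {P·γ₁·q(f) - f} and f̄₂ is the unique positive solution of P·γ₂·q(f) = f. -/
/-!
Against a rival who spends nothing, attacker 1 wins outright, so `f̲₁` is a best response by its
defining property. Attacker 2 can only win by outbidding `f̲₁ ≥ f̄₂`; but `q(f)/f` is strictly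
decreasing for a strictly concave `q` with `q 0 = 0`, so beyond the break-even point `f̄₂` the
expected prize `P·γ₂·q(f)` falls short of the cost `f`.
-/

open Classical in
/-- Attacker 1's payoff in the contest: the higher spender wins (ties go to
attacker 1), the winner succeeds with probability `γ·q(f)` earning prize `P`,
and both pay their expenditure. -/
noncomputable def pay1 (P γ1 : ℝ) (q : ℝ → ℝ) (f1 f2 : ℝ) : ℝ :=
  if f2 ≤ f1 then P * γ1 * q f1 - f1 else -f1

open Classical in
/-- Attacker 2's payoff in the contest (ties go to attacker 1). -/
noncomputable def pay2 (P γ2 : ℝ) (q : ℝ → ℝ) (f2 f1 : ℝ) : ℝ :=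
  if f1 < f2 then P * γ2 * q f2 - f2 else -f2

open Set

namespace StrictConcaveOn

variable {q : ℝ → ℝ}

theorem div_lt_div_of_lt (hq : StrictConcaveOn ℝ (Ici 0) q) (hq0 : q 0 = 0) {a b : ℝ}
    (ha : 0 < a) (hab : a < b) : q b / b < q a / a := by
  simpa [hq0] using
    hq.secant_strict_mono self_mem_Ici ha.le (ha.trans hab).le ha.ne' (ha.trans hab).ne' hab

theorem mul_lt_of_mul_eq_of_lt (hq : StrictConcaveOn ℝ (Ici 0) q) (hq0 : q 0 = 0)
    {c a b : ℝ} (hc : 0 < c) (ha : 0 < a) (hfix : c * q a = a) (hab : a < b) :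
    c * q b < b := by
  have hb : 0 < b := ha.trans hab
  calc c * q b = b * (c * (q b / b)) := by field_simp
    _ < b * (c * (q a / a)) :=
      mul_lt_mul_of_pos_left (mul_lt_mul_of_pos_left (hq.div_lt_div_of_lt hq0 ha hab) hc) hb
    _ = b := by rw [mul_div_assoc', hfix, div_self ha.ne', mul_one]

end StrictConcaveOn

theorem contest_pure_equilibrium_general (P γ1 γ2 : ℝ) (q : ℝ → ℝ)
    (hP : 0 < P) (hγ2 : 0 < γ2)
    (hconc : StrictConcaveOn ℝ (Set.Ici 0) q)
    (hq0 : q 0 = 0)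
    (flo1 fbar2 : ℝ) (hflo1 : 0 ≤ flo1)
    (hmax : ∀ f ≥ (0:ℝ), P * γ1 * q f - f ≤ P * γ1 * q flo1 - flo1)
    (hbar2 : 0 < fbar2) (hzero : P * γ2 * q fbar2 = fbar2)
    (hge : fbar2 ≤ flo1) :
    (∀ f1 ≥ (0:ℝ), pay1 P γ1 q f1 0 ≤ pay1 P γ1 q flo1 0) ∧
    (∀ f2 ≥ (0:ℝ), pay2 P γ2 q f2 flo1 ≤ pay2 P γ2 q 0 flo1) := by
  refine ⟨fun f1 hf1 => ?_, fun f2 _ => ?_⟩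
  · simpa only [pay1, if_pos hf1, if_pos hflo1] using hmax f1 hf1
  · have hstay : pay2 P γ2 q 0 flo1 = 0 := by simp [pay2, not_lt.2 hflo1]
    rw [hstay, pay2]
    split_ifs with hwin
    · have hloss := hconc.mul_lt_of_mul_eq_of_lt hq0 (by positivity) hbar2 hzero
        (hge.trans_lt hwin)
      linarith
    · linarith

/-- If `f̲₁ ≥ f̄₂`, then (attacker 1 spends `f̲₁`, attacker 2 spends `0`) is a
pure-strategy equilibrium of the two-attacker contest, where `f̲₁` maximizes
`P·γ₁·q(f) - f` over `f ≥ 0` and `f̄₂ > 0` is the unique positive solution of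
`P·γ₂·q(f) = f`. -/
theorem contest_pure_equilibrium (P γ1 γ2 : ℝ) (q : ℝ → ℝ)
    (hP : 0 < P) (hγ2 : 0 < γ2) (hγ : γ2 ≤ γ1)
    (hmono : StrictMonoOn q (Set.Ici 0))
    (hconc : StrictConcaveOn ℝ (Set.Ici 0) q)
    (hdiff : DifferentiableOn ℝ q (Set.Ici 0))
    (hq0 : q 0 = 0) (hqrange : ∀ f ≥ (0:ℝ), q f ∈ Set.Icc (0:ℝ) 1)
    (flo1 fbar2 : ℝ) (hflo1 : 0 ≤ flo1)
    (hmax : ∀ f ≥ (0:ℝ), P * γ1 * q f - f ≤ P * γ1 * q flo1 - flo1)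
    (hbar2 : 0 < fbar2) (hzero : P * γ2 * q fbar2 = fbar2)
    (huniq : ∀ f > (0:ℝ), P * γ2 * q f = f → f = fbar2)
    (hge : fbar2 ≤ flo1) :
    (∀ f1 ≥ (0:ℝ), pay1 P γ1 q f1 0 ≤ pay1 P γ1 q flo1 0) ∧
    (∀ f2 ≥ (0:ℝ), pay2 P γ2 q f2 flo1 ≤ pay2 P γ2 q 0 flo1) :=
  contest_pure_equilibrium_general P γ1 γ2 q hP hγ2 hconc hq0 flo1 fbar2 hflo1 hmax hbar2 hzero hge
end

section
/- In the commit-reveal commitment game with two attackers, if β·V̲(γ₁) > c, then the unique pure-strategy Nash equilibrium is that attacker 1 commits and attacker 2 does not commit. -/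
/-! Committing is strictly dominant for attacker 1, since even the contested value `V̲(γ₁)`
outweighs the cost. Every equilibrium therefore has attacker 1 committing, and against a
committed attacker 1, attacker 2 only pays the cost `c > 0` by committing too. -/

/-- Attacker 1's payoff in the commitment game. -/
def commitPay1 (c β V1 Vlow1 : ℝ) (a1 a2 : Bool) : ℝ :=
  if a1 then -c + β * (if a2 then Vlow1 else V1) else 0

/-- Attacker 2's payoff in the commitment game. -/
def commitPay2 (c β V2 : ℝ) (a2 a1 : Bool) : ℝ :=
  if a2 then -c + β * (if a1 then 0 else V2) else 0

/-- Pure-strategy Nash equilibrium of the commitment game. -/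
def CommitNE (c β V1 Vlow1 V2 : ℝ) (a1 a2 : Bool) : Prop :=
  (∀ b, commitPay1 c β V1 Vlow1 b a2 ≤ commitPay1 c β V1 Vlow1 a1 a2) ∧
  (∀ b, commitPay2 c β V2 b a1 ≤ commitPay2 c β V2 a2 a1)

section

variable {c β V1 Vlow1 V2 : ℝ}

theorem commitPay1_false_lt_true (hβ : 0 ≤ β) (hVl : Vlow1 ≤ V1) (h : c < β * Vlow1)
    (a2 : Bool) : commitPay1 c β V1 Vlow1 false a2 < commitPay1 c β V1 Vlow1 true a2 := by
  have hV : β * Vlow1 ≤ β * V1 := mul_le_mul_of_nonneg_left hVl hβ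
  cases a2 <;> simp only [commitPay1, Bool.false_eq_true, if_true, if_false] <;> linarith

theorem commitPay2_true_lt_false_of_commit (hc : 0 < c) :
    commitPay2 c β V2 true true < commitPay2 c β V2 false true := by
  simpa [commitPay2] using hc

theorem commitNE_iff
    (h1 : ∀ a2, commitPay1 c β V1 Vlow1 false a2 < commitPay1 c β V1 Vlow1 true a2)
    (h2 : commitPay2 c β V2 true true < commitPay2 c β V2 false true) {a1 a2 : Bool} :
    CommitNE c β V1 Vlow1 V2 a1 a2 ↔ a1 = true ∧ a2 = false := by
  constructor
  · rintro ⟨hbest1, hbest2⟩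
    obtain rfl : a1 = true := by
      by_contra hne
      rw [Bool.not_eq_true] at hne
      subst hne
      exact (h1 a2).not_ge (hbest1 true)
    obtain rfl : a2 = false := by
      by_contra hne
      rw [Bool.not_eq_false] at hne
      subst hne
      exact h2.not_ge (hbest2 false)
    exact ⟨rfl, rfl⟩
  · rintro ⟨rfl, rfl⟩
    refine ⟨fun b => ?_, fun b => ?_⟩ <;> cases b
    · exact (h1 false).le
    · exact le_rfl
    · exact le_rfl
    · exact h2.le

end

theorem strong_attacker_commits_alone_general (c β V1 Vlow1 V2 : ℝ)
    (hc : 0 < c) (hβ0 : 0 < β)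
    (hVl : Vlow1 ≤ V1) (h : β * Vlow1 > c) :
    CommitNE c β V1 Vlow1 V2 true false ∧
      ∀ a1 a2, CommitNE c β V1 Vlow1 V2 a1 a2 → a1 = true ∧ a2 = false := by
  have hNE := fun {a1 a2 : Bool} =>
    commitNE_iff (V2 := V2) (a1 := a1) (a2 := a2)
      (commitPay1_false_lt_true hβ0.le hVl h) (commitPay2_true_lt_false_of_commit hc)
  exact ⟨hNE.2 ⟨rfl, rfl⟩, fun _ _ => hNE.1⟩

/-- If `β·V̲(γ₁) > c`, the unique pure-strategy Nash equilibrium of the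
commitment game is: attacker 1 commits and attacker 2 does not. -/
theorem strong_attacker_commits_alone (c β V1 Vlow1 V2 : ℝ)
    (hc : 0 < c) (hβ0 : 0 < β) (hβ1 : β ≤ 1)
    (hV2 : 0 ≤ V2) (hVl : Vlow1 ≤ V1) (h : β * Vlow1 > c) :
    CommitNE c β V1 Vlow1 V2 true false ∧
      ∀ a1 a2, CommitNE c β V1 Vlow1 V2 a1 a2 → a1 = true ∧ a2 = false :=
  strong_attacker_commits_alone_general c β V1 Vlow1 V2 hc hβ0 hVl h
end

section
/- In the two-attacker contest, in any equilibrium, whenever f̲₁ < f̄₂, the weaker attacker's (attacker 2's) expected payoff equals 0. -/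
open MeasureTheory

/-- Attacker 1's expected payoff under mixed strategies `μ1, μ2`. -/
noncomputable def U1 (P γ1 : ℝ) (q : ℝ → ℝ) (μ1 μ2 : Measure ℝ) : ℝ :=
  ∫ f1, ∫ f2, pay1 P γ1 q f1 f2 ∂μ2 ∂μ1

/-- Attacker 2's expected payoff under mixed strategies `μ1, μ2`. -/
noncomputable def U2 (P γ2 : ℝ) (q : ℝ → ℝ) (μ1 μ2 : Measure ℝ) : ℝ :=
  ∫ f1, ∫ f2, pay2 P γ2 q f2 f1 ∂μ2 ∂μ1

lemma integral_ite_split (μ : Measure ℝ) [IsProbabilityMeasure μ]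
    {S : Set ℝ} (hS : MeasurableSet S) (a b : ℝ) (φ : ℝ → ℝ)
    (hmem : ∀ x ∈ S, φ x = a) (hnmem : ∀ x ∉ S, φ x = b) :
    ∫ x, φ x ∂μ = (μ S).toReal * (a - b) + b := by
  have hφ : φ = fun x => S.indicator (fun _ => a - b) x + b := by
    funext x
    by_cases h : x ∈ S
    · rw [hmem x h, Set.indicator_of_mem h]; ring
    · rw [hnmem x h, Set.indicator_of_notMem h]; ring
  rw [hφ, integral_add ((integrable_const (a - b)).indicator hS) (integrable_const b),
    integral_indicator_const _ hS, integral_const]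
  simp [measure_univ, Measure.real]

lemma exists_ball_lt {g : ℝ → ℝ} (hg : Continuous g) {x v : ℝ} (hx : g x < v) :
    ∃ ε > 0, ∀ y, |y - x| < ε → g y < v := by
  have hop : IsOpen {y : ℝ | g y < v} := isOpen_lt hg continuous_const
  obtain ⟨ε, hε, hball⟩ := Metric.isOpen_iff.1 hop x hx
  exact ⟨ε, hε, fun y hy => hball (by rwa [Metric.mem_ball, Real.dist_eq])⟩

lemma inner1 (P γ1 : ℝ) (q : ℝ → ℝ) (μ2 : Measure ℝ) [IsProbabilityMeasure μ2] (f1 : ℝ) :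
    ∫ f2, pay1 P γ1 q f1 f2 ∂μ2 = (μ2 (Set.Iic f1)).toReal * (P * γ1 * q f1) - f1 := by
  rw [integral_ite_split μ2 (measurableSet_Iic (a := f1)) (P * γ1 * q f1 - f1) (-f1)
    (fun f2 => pay1 P γ1 q f1 f2)
    (fun x hx => by simp [pay1, Set.mem_Iic.1 hx])
    (fun x hx => by simp [pay1, Set.mem_Iic] at hx ⊢; simp [not_le.2 hx, le_of_lt, hx.not_ge])]
  ring

lemma U1_eq (P γ1 : ℝ) (q : ℝ → ℝ) (μ1 μ2 : Measure ℝ) [IsProbabilityMeasure μ2] :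
    U1 P γ1 q μ1 μ2 = ∫ f1, ((μ2 (Set.Iic f1)).toReal * (P * γ1 * q f1) - f1) ∂μ1 := by
  unfold U1
  exact integral_congr_ae (Filter.Eventually.of_forall fun f1 => inner1 P γ1 q μ2 f1)

lemma U1_dirac (P γ1 : ℝ) (q : ℝ → ℝ) (μ2 : Measure ℝ) [IsProbabilityMeasure μ2] (f : ℝ) :
    U1 P γ1 q (Measure.dirac f) μ2 = (μ2 (Set.Iic f)).toReal * (P * γ1 * q f) - f := by
  unfold U1
  rw [integral_dirac]
  exact inner1 P γ1 q μ2 f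

lemma U2_dirac (P γ2 : ℝ) (q : ℝ → ℝ) (μ1 : Measure ℝ) [IsProbabilityMeasure μ1] (f : ℝ) :
    U2 P γ2 q μ1 (Measure.dirac f) = (μ1 (Set.Iio f)).toReal * (P * γ2 * q f) - f := by
  unfold U2
  have h1 : ∀ f1 : ℝ, ∫ f2, pay2 P γ2 q f2 f1 ∂(Measure.dirac f) = pay2 P γ2 q f f1 :=
    fun f1 => integral_dirac _ f
  rw [integral_congr_ae (Filter.Eventually.of_forall h1)]
  rw [integral_ite_split μ1 (measurableSet_Iio (a := f)) (P * γ2 * q f - f) (-f)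
    (fun f1 => pay2 P γ2 q f f1)
    (fun x hx => by simp [pay2, Set.mem_Iio.1 hx])
    (fun x hx => by simp [pay2, Set.mem_Iio] at hx ⊢; simp [hx, not_lt.2 hx])]
  ring

/-- Mixed-strategy Nash equilibrium of the contest: no attacker can improve by
deviating to another probability measure supported on `[0, ∞)`. -/
def ContestEq (P γ1 γ2 : ℝ) (q : ℝ → ℝ) (μ1 μ2 : Measure ℝ) : Prop :=
  (∀ ν : Measure ℝ, IsProbabilityMeasure ν → ν (Set.Iio 0) = 0 →
    U1 P γ1 q ν μ2 ≤ U1 P γ1 q μ1 μ2) ∧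
  (∀ ν : Measure ℝ, IsProbabilityMeasure ν → ν (Set.Iio 0) = 0 →
    U2 P γ2 q μ1 ν ≤ U2 P γ2 q μ1 μ2)

set_option maxHeartbeats 1000000 in
/-- Full dissipation of rents: in the two-attacker contest with `f̲₁ < f̄₂`, in
any mixed-strategy equilibrium the weaker attacker's expected payoff is `0`
(she can guarantee `0` by spending nothing, and a positive payoff would let
attacker 1 profitably overbid). -/
theorem weak_attacker_zero_payoff (P γ1 γ2 : ℝ) (q : ℝ → ℝ)
    (hP : 0 < P) (hγ2 : 0 < γ2) (hγ : γ2 ≤ γ1)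
    (hmono : StrictMonoOn q (Set.Ici 0))
    (hconc : StrictConcaveOn ℝ (Set.Ici 0) q)
    (hdiff : DifferentiableOn ℝ q (Set.Ici 0))
    (hq0 : q 0 = 0) (hqrange : ∀ f ≥ (0:ℝ), q f ∈ Set.Icc (0:ℝ) 1)
    (flo1 fbar2 : ℝ) (hflo1 : 0 ≤ flo1)
    (hmax : ∀ f ≥ (0:ℝ), P * γ1 * q f - f ≤ P * γ1 * q flo1 - flo1)
    (hbar2 : 0 < fbar2) (hzero : P * γ2 * q fbar2 = fbar2)
    (hlt : flo1 < fbar2)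
    (μ1 μ2 : Measure ℝ) (hμ1 : IsProbabilityMeasure μ1)
    (hμ2 : IsProbabilityMeasure μ2)
    (hs1 : μ1 (Set.Iio 0) = 0) (hs2 : μ2 (Set.Iio 0) = 0)
    (heq : ContestEq P γ1 γ2 q μ1 μ2) :
    U2 P γ2 q μ1 μ2 = 0 := by
  classical
  have hγ1 : 0 < γ1 := lt_of_lt_of_le hγ2 hγ
  have hPγ2 : 0 < P * γ2 := mul_pos hP hγ2
  have hPγ1 : 0 < P * γ1 := mul_pos hP hγ1
  -- continuous extension of q
  set Q : ℝ → ℝ := fun x => q (max x 0) with hQdef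
  have hQcont : Continuous Q :=
    hdiff.continuousOn.comp_continuous (continuous_id.max continuous_const)
      (fun x => le_max_right x 0)
  have hQeq : ∀ f : ℝ, 0 ≤ f → Q f = q f := by
    intro f hf; simp only [hQdef]; rw [max_eq_left hf]
  have hQ01 : ∀ x : ℝ, 0 ≤ Q x ∧ Q x ≤ 1 := fun x =>
    ⟨(hqrange _ (le_max_right _ _)).1, (hqrange _ (le_max_right _ _)).2⟩
  have hae2 : ∀ᵐ f2 ∂μ2, 0 ≤ f2 := by
    rw [ae_iff]
    rw [show {a : ℝ | ¬0 ≤ a} = Set.Iio 0 by ext x; simp [not_le]]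
    exact hs2
  have hae1 : ∀ᵐ f1 ∂μ1, 0 ≤ f1 := by
    rw [ae_iff]
    rw [show {a : ℝ | ¬0 ≤ a} = Set.Iio 0 by ext x; simp [not_le]]
    exact hs1
  set v2 := U2 P γ2 q μ1 μ2 with hv2def
  set v1 := U1 P γ1 q μ1 μ2 with hv1def
  -- lower bound
  have hv2low : 0 ≤ v2 := by
    have h0 := heq.2 (Measure.dirac 0) inferInstance
      (by rw [Measure.dirac_apply' _ measurableSet_Iio]; simp)
    rw [U2_dirac] at h0
    simpa [hq0] using h0
  -- pure deviation bounds
  have hdev2 : ∀ f : ℝ, 0 ≤ f → (μ1 (Set.Iio f)).toReal * (P * γ2 * q f) - f ≤ v2 := by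
    intro f hf
    have h0 := heq.2 (Measure.dirac f) inferInstance
      (by rw [Measure.dirac_apply' _ measurableSet_Iio]; simp [Set.indicator_of_notMem, not_lt.2 hf])
    rwa [U2_dirac] at h0
  have hdev1 : ∀ f : ℝ, 0 ≤ f → (μ2 (Set.Iic f)).toReal * (P * γ1 * q f) - f ≤ v1 := by
    intro f hf
    have h0 := heq.1 (Measure.dirac f) inferInstance
      (by rw [Measure.dirac_apply' _ measurableSet_Iio]; simp [Set.indicator_of_notMem, not_lt.2 hf])
    rwa [U1_dirac] at h0
  by_contra hne
  have hv2pos : 0 < v2 := hv2low.lt_of_ne (Ne.symm hne)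
  -- the function g
  set g : ℝ → ℝ := fun f => P * γ2 * Q f - f with hgdef
  have hgcont : Continuous g := (continuous_const.mul hQcont).sub continuous_id
  have hgbar : g fbar2 = 0 := by
    simp only [hgdef]; rw [hQeq fbar2 hbar2.le, hzero]; ring
  have hgneg : ∀ f : ℝ, fbar2 < f → g f < 0 := by
    intro f hff
    have hf0 : (0:ℝ) < f := hbar2.trans hff
    have ht : 0 < fbar2 / f := div_pos hbar2 hf0
    have ht1 : fbar2 / f < 1 := (div_lt_one hf0).2 hff
    have hkey : fbar2 / f * q f < q fbar2 := by
      have h := hconc.2 (Set.self_mem_Ici (a := (0:ℝ))) (Set.mem_Ici.2 hf0.le)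
        (ne_of_lt hf0) (sub_pos.2 ht1) ht (by ring)
      simp only [smul_eq_mul, hq0, mul_zero, zero_add, smul_zero] at h
      rwa [div_mul_cancel₀ _ hf0.ne'] at h
    have h2 : P * γ2 * (fbar2 / f * q f) < P * γ2 * q fbar2 :=
      mul_lt_mul_of_pos_left hkey hPγ2
    rw [hzero] at h2
    have h3 : P * γ2 * q f * (fbar2 / f) < fbar2 := by
      have he : P * γ2 * (fbar2 / f * q f) = P * γ2 * q f * (fbar2 / f) := by ring
      linarith [he ▸ h2]
    have h4 : P * γ2 * q f < fbar2 / (fbar2 / f) := (lt_div_iff₀ ht).2 h3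
    have h5 : fbar2 / (fbar2 / f) = f := by field_simp
    simp only [hgdef]
    rw [hQeq f hf0.le]
    rw [h5] at h4
    linarith
  -- the cutoff u
  obtain ⟨δ, hδpos, hδ⟩ := exists_ball_lt hgcont (by rw [hgbar]; exact hv2pos)
  set u : ℝ := fbar2 - min δ fbar2 / 2 with hudef
  have hmin : 0 < min δ fbar2 := lt_min hδpos hbar2
  have hu0 : 0 ≤ u := by
    have := min_le_right δ fbar2; simp only [hudef]; linarith
  have hultf : u < fbar2 := by simp only [hudef]; linarith
  have hu : ∀ f : ℝ, u < f → g f < v2 := by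
    intro f hf
    rcases lt_trichotomy f fbar2 with h | h | h
    · apply hδ
      rw [abs_lt]
      have := min_le_left δ fbar2
      constructor <;> simp only [hudef] at hf <;> linarith
    · rw [h, hgbar]; exact hv2pos
    · exact (hgneg f h).trans hv2pos
  set h2 : ℝ → ℝ := fun f2 => (μ1 (Set.Iio f2)).toReal * (P * γ2 * Q f2) - f2 with hh2def
  -- pointwise: A1 weighted payoff below g
  have hh2_le_g : ∀ f2 : ℝ, h2 f2 ≤ g f2 := by
    intro f2
    have hA1le : (μ1 (Set.Iio f2)).toReal ≤ 1 := by
      have := ENNReal.toReal_mono (by simp) (prob_le_one (μ := μ1) (s := Set.Iio f2))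
      simpa using this
    have hA1nn : (0:ℝ) ≤ (μ1 (Set.Iio f2)).toReal := ENNReal.toReal_nonneg
    have hXnn : 0 ≤ P * γ2 * Q f2 := mul_nonneg hPγ2.le (hQ01 f2).1
    simp only [hh2def, hgdef]
    nlinarith
  -- integrability split
  by_cases hInt : Integrable (fun x : ℝ => x) μ2
  swap
  · -- infinite mean: v2 = 0
    apply hne
    have hI : ∀ f1 : ℝ, ∫ f2, pay2 P γ2 q f2 f1 ∂μ2 = 0 := by
      intro f1
      apply integral_undef
      intro hcon
      apply hInt
      have hb : ∀ᵐ x ∂μ2, ‖(fun x : ℝ => x) x‖ ≤ |pay2 P γ2 q x f1| + P * γ2 := by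
        filter_upwards [hae2] with x hx
        have hq := hqrange x hx
        simp only [Real.norm_eq_abs, abs_of_nonneg hx]
        by_cases h : f1 < x
        · simp only [pay2, if_pos h]
          have h1 : x - P * γ2 * q x ≤ |P * γ2 * q x - x| := by
            rw [abs_sub_comm]; exact le_abs_self _
          have h2 : P * γ2 * q x ≤ P * γ2 := by nlinarith [hq.2]
          linarith
        · simp only [pay2, if_neg h, abs_neg, abs_of_nonneg hx]
          linarith [hPγ2.le]
      exact Integrable.mono' (hcon.abs.add (integrable_const (P * γ2)))
        aestronglyMeasurable_id hb
    show U2 P γ2 q μ1 μ2 = 0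
    unfold U2
    rw [integral_congr_ae (Filter.Eventually.of_forall hI)]
    simp
  -- finite mean case: Fubini
  set F : ℝ → ℝ → ℝ := fun f1 f2 => if f1 < f2 then P * γ2 * Q f2 - f2 else -f2 with hFdef
  have hFmeas : Measurable (Function.uncurry F) := by
    have : Function.uncurry F = fun p : ℝ × ℝ =>
        if p.1 < p.2 then P * γ2 * Q p.2 - p.2 else -p.2 := rfl
    rw [this]
    exact Measurable.ite (measurableSet_lt measurable_fst measurable_snd)
      ((continuous_const.mul (hQcont.comp continuous_snd)).sub continuous_snd).measurable
      continuous_snd.neg.measurable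
  have hFbound : ∀ f1 f2 : ℝ, |F f1 f2| ≤ P * γ2 + |f2| := by
    intro f1 f2
    have h01 := hQ01 f2
    have h1 : -|f2| ≤ f2 := neg_abs_le f2
    have h2 : f2 ≤ |f2| := le_abs_self f2
    simp only [hFdef]
    split_ifs with h
    · rw [abs_le]; constructor <;> nlinarith
    · rw [abs_neg]; linarith [hPγ2.le]
  have hF1m : ∀ f1 : ℝ, Measurable (fun f2 => Function.uncurry F (f1, f2)) :=
    fun f1 => hFmeas.comp measurable_prodMk_left
  have hFint : Integrable (Function.uncurry F) (μ1.prod μ2) := by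
    rw [integrable_prod_iff hFmeas.aestronglyMeasurable]
    constructor
    · refine Filter.Eventually.of_forall fun f1 => ?_
      refine Integrable.mono' ((integrable_const (P * γ2)).add hInt.abs)
        ((hF1m f1).aestronglyMeasurable)
        (Filter.Eventually.of_forall fun f2 => ?_)
      rw [Real.norm_eq_abs]
      exact hFbound f1 f2
    · have hm : StronglyMeasurable fun x : ℝ => ∫ y, ‖Function.uncurry F (x, y)‖ ∂μ2 :=
        hFmeas.norm.stronglyMeasurable.integral_prod_right'
      refine Integrable.mono' (integrable_const (P * γ2 + ∫ y, |y| ∂μ2))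
        hm.aestronglyMeasurable (Filter.Eventually.of_forall fun x => ?_)
      have hint1 : Integrable (fun y => ‖Function.uncurry F (x, y)‖) μ2 := by
        refine Integrable.mono' ((integrable_const (P * γ2)).add hInt.abs)
          ((hF1m x).norm.aestronglyMeasurable)
          (Filter.Eventually.of_forall fun f2 => ?_)
        simp only [Pi.add_apply, norm_norm, Real.norm_eq_abs, abs_abs]
        exact hFbound x f2
      have hint2 : Integrable (fun y : ℝ => P * γ2 + |y|) μ2 :=
        (integrable_const (P * γ2)).add hInt.abs
      have hle : ∫ y, ‖Function.uncurry F (x, y)‖ ∂μ2 ≤ ∫ y, (P * γ2 + |y|) ∂μ2 := by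
        refine integral_mono hint1 hint2 fun y => ?_
        rw [Real.norm_eq_abs]
        exact hFbound x y
      have hnn : 0 ≤ ∫ y, ‖Function.uncurry F (x, y)‖ ∂μ2 :=
        integral_nonneg fun y => norm_nonneg _
      rw [Real.norm_eq_abs, abs_of_nonneg hnn]
      rw [integral_add (integrable_const _) hInt.abs, integral_const] at hle
      simpa [measure_univ] using hle
  have hswap : v2 = ∫ f2, h2 f2 ∂μ2 := by
    simp only [hh2def]
    have h1 : v2 = ∫ f1, ∫ f2, F f1 f2 ∂μ2 ∂μ1 := by
      rw [hv2def]
      unfold U2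
      refine integral_congr_ae (Filter.Eventually.of_forall fun f1 => ?_)
      refine integral_congr_ae ?_
      filter_upwards [hae2] with f2 hf2
      simp only [pay2, hFdef, hQeq f2 hf2]
    rw [h1, integral_integral_swap hFint]
    refine integral_congr_ae (Filter.Eventually.of_forall fun f2 => ?_)
    refine Eq.trans (integral_ite_split μ1 (measurableSet_Iio (a := f2)) (P * γ2 * Q f2 - f2) (-f2)
      (fun f1 => F f1 f2)
      (fun x hx => by simp only [hFdef]; rw [if_pos (Set.mem_Iio.1 hx)])
      (fun x hx => by simp only [hFdef]; rw [if_neg (by simpa [Set.mem_Iio] using hx)])) ?_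
    ring
  -- a.e. equality for attacker 2
  have hA1meas : Measurable fun f : ℝ => (μ1 (Set.Iio f)).toReal := by
    apply Monotone.measurable
    intro a b hab
    exact ENNReal.toReal_mono (measure_ne_top _ _) (measure_mono (Set.Iio_subset_Iio hab))
  have hbint : Integrable (fun f : ℝ => (μ1 (Set.Iio f)).toReal * (P * γ2 * Q f)) μ2 := by
    refine Integrable.mono' (integrable_const (P * γ2))
      ((hA1meas.mul (continuous_const.mul hQcont).measurable).aestronglyMeasurable)
      (Filter.Eventually.of_forall fun f => ?_)
    have hA1le : (μ1 (Set.Iio f)).toReal ≤ 1 := by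
      have := ENNReal.toReal_mono (by simp) (prob_le_one (μ := μ1) (s := Set.Iio f))
      simpa using this
    have hA1nn : (0:ℝ) ≤ (μ1 (Set.Iio f)).toReal := ENNReal.toReal_nonneg
    have h01 := hQ01 f
    rw [Real.norm_eq_abs, abs_of_nonneg (mul_nonneg hA1nn (mul_nonneg hPγ2.le h01.1))]
    have t1 : (μ1 (Set.Iio f)).toReal * (P * γ2 * Q f) ≤ P * γ2 * Q f :=
      mul_le_of_le_one_left (mul_nonneg hPγ2.le h01.1) hA1le
    nlinarith [h01.2]
  have hh2int : Integrable h2 μ2 := by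
    rw [hh2def]
    exact hbint.sub hInt
  have haeq2 : ∀ᵐ f2 ∂μ2, h2 f2 = v2 := by
    have hle : ∀ᵐ f2 ∂μ2, h2 f2 ≤ v2 := by
      filter_upwards [hae2] with f2 hf2
      simp only [hh2def]
      rw [hQeq f2 hf2]
      exact hdev2 f2 hf2
    have hint : Integrable (fun f2 => v2 - h2 f2) μ2 := (integrable_const v2).sub hh2int
    have hz : ∫ f2, (v2 - h2 f2) ∂μ2 = 0 := by
      rw [integral_sub (integrable_const v2) hh2int, integral_const]
      have : ∫ f2, h2 f2 ∂μ2 = v2 := hswap.symm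
      rw [this]
      simp [measure_univ]
    have hae0 := (integral_eq_zero_iff_of_nonneg_ae
      (hle.mono fun x hx => sub_nonneg.2 hx) hint).1 hz
    filter_upwards [hae0] with f2 hf2
    have : v2 - h2 f2 = 0 := hf2
    linarith
  -- helper: a.e. upper bound gives measure-one Iic
  have hmeasIic : ∀ t : ℝ, (∀ᵐ f2 ∂μ2, f2 ≤ t) → μ2 (Set.Iic t) = 1 := by
    intro t ht
    have h0 : μ2 {x : ℝ | ¬x ≤ t} = 0 := ae_iff.1 ht
    rw [show {x : ℝ | ¬x ≤ t} = Set.Ioi t by ext x; simp [not_le]] at h0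
    rw [show Set.Iic t = (Set.Ioi t)ᶜ by simp]
    rw [measure_compl measurableSet_Ioi (measure_ne_top _ _), measure_univ, h0, tsub_zero]
  -- the set S and its infimum T
  set S : Set ℝ := {f : ℝ | μ2 (Set.Iic f) = 1} with hSdef
  have huS : u ∈ S := by
    refine hmeasIic u ?_
    filter_upwards [hae2, haeq2] with f2 hf2 heq2
    by_contra hgt
    push_neg at hgt
    have h1 : g f2 < v2 := hu f2 hgt
    have h2' : h2 f2 ≤ g f2 := hh2_le_g f2
    linarith
  have hSne : S.Nonempty := ⟨u, huS⟩
  have hSlb : ∀ s ∈ S, (0:ℝ) ≤ s := by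
    intro s hs
    by_contra hneg
    push_neg at hneg
    have h1 : μ2 (Set.Iic s) ≤ μ2 (Set.Iio 0) :=
      measure_mono fun x hx => lt_of_le_of_lt hx hneg
    rw [hs2] at h1
    have h2' : μ2 (Set.Iic s) = 0 := le_antisymm h1 zero_le
    rw [hSdef] at hs
    simp only [Set.mem_setOf_eq] at hs
    rw [hs] at h2'
    exact one_ne_zero h2'
  have hSbdd : BddBelow S := ⟨0, hSlb⟩
  set T := sInf S with hTdef
  have hT0 : 0 ≤ T := le_csInf hSne hSlb
  have hTu : T ≤ u := csInf_le hSbdd huS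
  have hIoiT : μ2 (Set.Ioi T) = 0 := by
    have hsub : Set.Ioi T = ⋃ n : ℕ, Set.Ioi (T + 1 / (n + 1)) := by
      ext x
      simp only [Set.mem_Ioi, Set.mem_iUnion]
      constructor
      · intro hx
        obtain ⟨n, hn⟩ := exists_nat_one_div_lt (sub_pos.2 hx)
        exact ⟨n, by linarith⟩
      · rintro ⟨n, hn⟩
        have : 0 < 1 / ((n : ℝ) + 1) := by positivity
        linarith
    rw [hsub]
    refine measure_iUnion_null fun n => ?_
    have hpos : 0 < 1 / ((n : ℝ) + 1) := by positivity
    obtain ⟨s, hsS, hslt⟩ := (csInf_lt_iff hSbdd hSne).1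
      (show sInf S < T + 1 / (n + 1) by rw [← hTdef]; linarith)
    have h0 : μ2 (Set.Ioi s) = 0 := by
      rw [show Set.Ioi s = (Set.Iic s)ᶜ by simp,
        measure_compl measurableSet_Iic (measure_ne_top _ _), measure_univ, hsS]
      simp
    exact measure_mono_null (fun x hx => lt_trans hslt hx) h0
  have haeT : ∀ᵐ f2 ∂μ2, f2 ≤ T := by
    rw [ae_iff]
    rw [show {x : ℝ | ¬x ≤ T} = Set.Ioi T by ext x; simp [not_le]]
    exact hIoiT
  have hIicT : μ2 (Set.Iic T) = 1 := hmeasIic T haeT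
  -- v2 ≤ g T
  have hv2gT : v2 ≤ g T := by
    by_contra hltg
    push_neg at hltg
    obtain ⟨ε, hε, hball⟩ := exists_ball_lt hgcont hltg
    have hae_le : ∀ᵐ f2 ∂μ2, f2 ≤ T - ε / 2 := by
      filter_upwards [hae2, haeq2, haeT] with f2 h0 heq2 hT'
      by_contra hgt
      push_neg at hgt
      have habs : |f2 - T| < ε := by rw [abs_lt]; constructor <;> linarith
      have h1 : g f2 < v2 := hball f2 habs
      linarith [hh2_le_g f2]
    have hmem : T - ε / 2 ∈ S := hmeasIic _ hae_le
    have := csInf_le hSbdd hmem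
    rw [← hTdef] at this
    linarith
  -- v2 ≤ v1
  have hv1ge : v2 ≤ v1 := by
    have hd := hdev1 T hT0
    have hA2T : (μ2 (Set.Iic T)).toReal = 1 := by rw [hIicT]; simp
    rw [hA2T, one_mul] at hd
    have hqT : 0 ≤ q T := (hqrange T hT0).1
    have hγq : P * γ2 * q T ≤ P * γ1 * q T := by
      nlinarith [mul_nonneg (mul_nonneg hP.le (sub_nonneg.2 hγ)) hqT]
    have hgT : g T = P * γ2 * q T - T := by simp only [hgdef]; rw [hQeq T hT0]
    linarith
  have hv1pos : 0 < v1 := lt_of_lt_of_le hv2pos hv1ge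
  -- attacker 1 representation
  have hU1 : v1 = ∫ f1, ((μ2 (Set.Iic f1)).toReal * (P * γ1 * q f1) - f1) ∂μ1 :=
    U1_eq P γ1 q μ1 μ2
  set h1f : ℝ → ℝ := fun f => (μ2 (Set.Iic f)).toReal * (P * γ1 * q f) - f with hh1def
  have hA2meas : Measurable fun f : ℝ => (μ2 (Set.Iic f)).toReal := by
    apply Monotone.measurable
    intro a b hab
    exact ENNReal.toReal_mono (measure_ne_top _ _) (measure_mono (Set.Iic_subset_Iic.2 hab))
  set h1Q : ℝ → ℝ := fun f => (μ2 (Set.Iic f)).toReal * (P * γ1 * Q f) - f with hh1Qdef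
  have hcong1 : h1f =ᵐ[μ1] h1Q := by
    filter_upwards [hae1] with f hf
    simp only [hh1def, hh1Qdef]
    rw [hQeq f hf]
  have hh1int : Integrable h1f μ1 := by
    by_contra hni
    have hz : v1 = 0 := by
      rw [hU1]
      exact integral_undef hni
    linarith
  have haeq1 : ∀ᵐ f1 ∂μ1, h1f f1 = v1 := by
    have hle : ∀ᵐ f1 ∂μ1, h1f f1 ≤ v1 := by
      filter_upwards [hae1] with f hf
      exact hdev1 f hf
    have hint : Integrable (fun f1 => v1 - h1f f1) μ1 := (integrable_const v1).sub hh1int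
    have hz : ∫ f1, (v1 - h1f f1) ∂μ1 = 0 := by
      rw [integral_sub (integrable_const v1) hh1int, integral_const]
      rw [show ∫ f1, h1f f1 ∂μ1 = v1 from hU1.symm]
      simp [measure_univ]
    have hae0 := (integral_eq_zero_iff_of_nonneg_ae
      (hle.mono fun x hx => sub_nonneg.2 hx) hint).1 hz
    filter_upwards [hae0] with f1 hf1
    have : v1 - h1f f1 = 0 := hf1
    linarith
  -- the infimum β of attacker 1's support
  set Sb : Set ℝ := {f : ℝ | 0 < μ1 (Set.Iio f)} with hSbdef
  have hSbne : Sb.Nonempty := by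
    by_contra hemp
    rw [Set.not_nonempty_iff_eq_empty] at hemp
    have hall : ∀ f : ℝ, μ1 (Set.Iio f) = 0 := by
      intro f
      by_contra h
      have : f ∈ Sb := pos_iff_ne_zero.2 h
      rw [hemp] at this
      exact this
    have huniv : μ1 (Set.univ : Set ℝ) = 0 := by
      rw [show (Set.univ : Set ℝ) = ⋃ n : ℕ, Set.Iio (n : ℝ) by
        ext x; simp only [Set.mem_univ, Set.mem_iUnion, Set.mem_Iio, true_iff]
        exact exists_nat_gt x]
      exact measure_iUnion_null fun n => hall n
    rw [measure_univ] at huniv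
    exact one_ne_zero huniv
  have hSblb : ∀ s ∈ Sb, (0:ℝ) ≤ s := by
    intro s hs
    by_contra hneg
    push_neg at hneg
    have h1 : μ1 (Set.Iio s) ≤ μ1 (Set.Iio 0) :=
      measure_mono (Set.Iio_subset_Iio hneg.le)
    rw [hs1] at h1
    have h2' : μ1 (Set.Iio s) = 0 := le_antisymm h1 zero_le
    rw [hSbdef] at hs
    simp only [Set.mem_setOf_eq] at hs
    rw [h2'] at hs
    exact lt_irrefl _ hs
  have hSbbdd : BddBelow Sb := ⟨0, hSblb⟩
  set β := sInf Sb with hβdef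
  have hμ1Iioβ : μ1 (Set.Iio β) = 0 := by
    have hsub : Set.Iio β = ⋃ n : ℕ, Set.Iio (β - 1 / (n + 1)) := by
      ext x
      simp only [Set.mem_Iio, Set.mem_iUnion]
      constructor
      · intro hx
        obtain ⟨n, hn⟩ := exists_nat_one_div_lt (sub_pos.2 hx)
        exact ⟨n, by linarith⟩
      · rintro ⟨n, hn⟩
        have : 0 < 1 / ((n : ℝ) + 1) := by positivity
        linarith
    rw [hsub]
    refine measure_iUnion_null fun n => ?_
    by_contra h
    have hpos' : 0 < μ1 (Set.Iio (β - 1 / (n + 1))) := pos_iff_ne_zero.2 h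
    have hmem : (β - 1 / ((n:ℝ) + 1)) ∈ Sb := hpos'
    have hle := csInf_le hSbbdd hmem
    rw [← hβdef] at hle
    have : 0 < 1 / ((n : ℝ) + 1) := by positivity
    linarith
  have hμ2Iicβ : μ2 (Set.Iic β) = 0 := by
    have hae_gt : ∀ᵐ f2 ∂μ2, β < f2 := by
      filter_upwards [hae2, haeq2] with f2 h0 heq2
      have hA1pos : 0 < (μ1 (Set.Iio f2)).toReal := by
        by_contra hle'
        push_neg at hle'
        have hz : (μ1 (Set.Iio f2)).toReal = 0 := le_antisymm hle' ENNReal.toReal_nonneg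
        simp only [hh2def] at heq2
        rw [hz, zero_mul, zero_sub] at heq2
        linarith
      have hmem : f2 ∈ Sb := by
        show 0 < μ1 (Set.Iio f2)
        by_contra hz
        have : μ1 (Set.Iio f2) = 0 := by
          simpa using (not_lt.1 hz : μ1 (Set.Iio f2) ≤ 0)
        rw [this] at hA1pos
        simp at hA1pos
      have hβle : β ≤ f2 := csInf_le hSbbdd hmem
      rcases eq_or_lt_of_le hβle with hb | hb
      · exfalso
        have hz0 : μ1 (Set.Iio f2) = 0 := by rw [← hb]; exact hμ1Iioβ
        have hmem' : 0 < μ1 (Set.Iio f2) := hmem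
        rw [hz0] at hmem'
        exact lt_irrefl _ hmem'
      · exact hb
    have h0 : μ2 {x : ℝ | ¬β < x} = 0 := ae_iff.1 hae_gt
    rwa [show {x : ℝ | ¬β < x} = Set.Iic β by ext x; simp [not_lt]] at h0
  -- final contradiction
  set c1 := v1 / (P * γ1) with hc1def
  have hc1pos : 0 < c1 := div_pos hv1pos hPγ1
  have hstep : ∀ n : ℕ, ENNReal.ofReal c1 ≤ μ2 (Set.Iic (β + 1 / (n + 1))) := by
    intro n
    have hεpos : 0 < 1 / ((n : ℝ) + 1) := by positivity
    have hposm : 0 < μ1 (Set.Iio (β + 1 / (n + 1))) := by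
      obtain ⟨s, hsSb, hslt⟩ := (csInf_lt_iff hSbbdd hSbne).1
        (show sInf Sb < β + 1 / (n + 1) by rw [← hβdef]; linarith)
      exact lt_of_lt_of_le hsSb (measure_mono (Set.Iio_subset_Iio hslt.le))
    have hae_E : ∀ᵐ f1 ∂μ1, h1f f1 = v1 ∧ 0 ≤ f1 := haeq1.and hae1
    have hEc : μ1 {f1 : ℝ | ¬(h1f f1 = v1 ∧ 0 ≤ f1)} = 0 := ae_iff.1 hae_E
    have hne' : (Set.Iio (β + 1 / (n + 1)) ∩ {f1 : ℝ | h1f f1 = v1 ∧ 0 ≤ f1}).Nonempty := by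
      by_contra hempty
      rw [Set.not_nonempty_iff_eq_empty] at hempty
      have hsub : Set.Iio (β + 1 / ((n:ℝ) + 1)) ⊆ {f1 : ℝ | ¬(h1f f1 = v1 ∧ 0 ≤ f1)} := by
        intro x hx
        by_contra hx2
        simp only [Set.mem_setOf_eq, not_not] at hx2
        have : x ∈ Set.Iio (β + 1 / ((n:ℝ) + 1)) ∩ {f1 : ℝ | h1f f1 = v1 ∧ 0 ≤ f1} :=
          ⟨hx, hx2⟩
        rw [hempty] at this
        exact this
      have hle : μ1 (Set.Iio (β + 1 / ((n:ℝ) + 1))) ≤ μ1 {f1 : ℝ | ¬(h1f f1 = v1 ∧ 0 ≤ f1)} :=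
        measure_mono hsub
      rw [hEc] at hle
      exact hposm.ne' (le_antisymm hle zero_le)
    obtain ⟨f1, hf1lt, hf1E⟩ := hne'
    obtain ⟨hf1eq, hf1nn⟩ := hf1E
    have heq' : (μ2 (Set.Iic f1)).toReal * (P * γ1 * q f1) = v1 + f1 := by
      simp only [hh1def] at hf1eq
      linarith
    have hA2nn : (0:ℝ) ≤ (μ2 (Set.Iic f1)).toReal := ENNReal.toReal_nonneg
    have hqf1 := hqrange f1 hf1nn
    have hb : (μ2 (Set.Iic f1)).toReal * (P * γ1 * q f1) ≤ (μ2 (Set.Iic f1)).toReal * (P * γ1) := by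
      nlinarith [mul_nonneg hA2nn (mul_nonneg hPγ1.le (sub_nonneg.2 hqf1.2))]
    have hc1le : c1 ≤ (μ2 (Set.Iic f1)).toReal := by
      rw [hc1def, div_le_iff₀ hPγ1]
      nlinarith
    have hmono2 : (μ2 (Set.Iic f1)).toReal ≤ (μ2 (Set.Iic (β + 1 / (n + 1)))).toReal :=
      ENNReal.toReal_mono (measure_ne_top _ _)
        (measure_mono (Set.Iic_subset_Iic.2 (Set.mem_Iio.1 hf1lt).le))
    exact ENNReal.ofReal_le_of_le_toReal (le_trans hc1le hmono2)
  have hiInter : (⋂ n : ℕ, Set.Iic (β + 1 / ((n:ℝ) + 1))) = Set.Iic β := by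
    ext x
    simp only [Set.mem_iInter, Set.mem_Iic]
    constructor
    · intro h
      by_contra hx
      push_neg at hx
      obtain ⟨n, hn⟩ := exists_nat_one_div_lt (sub_pos.2 hx)
      have := h n
      linarith
    · intro h n
      have : 0 < 1 / ((n : ℝ) + 1) := by positivity
      linarith
  have hanti : Antitone fun n : ℕ => Set.Iic (β + 1 / ((n:ℝ) + 1)) := by
    intro m n hmn
    apply Set.Iic_subset_Iic.2
    have h1 : (0:ℝ) < (m:ℝ) + 1 := by positivity
    have h2 : ((m:ℝ) + 1) ≤ ((n:ℝ) + 1) := by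
      have := Nat.cast_le (α := ℝ).2 hmn
      linarith
    have := one_div_le_one_div_of_le h1 h2
    linarith
  have htend := tendsto_measure_iInter_atTop (μ := μ2)
    (fun n => measurableSet_Iic.nullMeasurableSet) hanti ⟨0, measure_ne_top _ _⟩
  rw [hiInter, hμ2Iicβ] at htend
  have hge : ENNReal.ofReal c1 ≤ 0 :=
    ge_of_tendsto htend (Filter.Eventually.of_forall hstep)
  have hfinal : (0:ENNReal) < ENNReal.ofReal c1 := ENNReal.ofReal_pos.2 hc1pos
  exact absurd hge (not_le.2 hfinal)
end
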